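/- arXiv:1804.10488 — 6 statements merged into one kernel-verified Lean document; each statement's English description precedes it below -/
import Mathlib

section
/- Under the item-position click model (click probabilities w̄(a,k) depending only on item and position, with w̄(a,k) ≥ 0), for any M > 0 and any policies h, π over lists, the expected clipped list estimate is at most the expected clipped item-position estimate, which is at most the true value: Σ_{a,k} w̄(a,k) · Σ_{A : A_k = a} min{h(A), M·π(A)} ≤ Σ_{a,k} w̄(a,k) · min{h(a,k), M·π(a,k)} ≤ Σ_{a,k} w̄(a,k) · h(a,k). -/
/-- Item-position marginal of a distribution over K-permutations. -/
def marg {E : Type*} [Fintype E] [DecidableEq E] {K : ℕ}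
    (h : {A : Fin K → E // Function.Injective A} → ℝ) (a : E) (k : Fin K) : ℝ :=
  ∑ A ∈ Finset.univ.filter
      (fun A : {A : Fin K → E // Function.Injective A} => A.1 k = a), h A

theorem stmt3 {E : Type*} [Fintype E] [DecidableEq E] {K : ℕ}
    (h π : {A : Fin K → E // Function.Injective A} → ℝ)
    (hh0 : ∀ A, 0 ≤ h A) (hπ0 : ∀ A, 0 ≤ π A)
    (hh1 : ∑ A, h A = 1) (hπ1 : ∑ A, π A = 1)
    (w : E → Fin K → ℝ) (hw : ∀ a k, 0 ≤ w a k)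
    (M : ℝ) (hM : 0 < M) :
    (∑ a : E, ∑ k : Fin K, w a k *
        ∑ A ∈ Finset.univ.filter
          (fun A : {A : Fin K → E // Function.Injective A} => A.1 k = a),
          min (h A) (M * π A))
      ≤ ∑ a : E, ∑ k : Fin K, w a k * min (marg h a k) (M * marg π a k) ∧
    (∑ a : E, ∑ k : Fin K, w a k * min (marg h a k) (M * marg π a k))
      ≤ ∑ a : E, ∑ k : Fin K, w a k * marg h a k := by
  constructor
  · refine Finset.sum_le_sum fun a _ => Finset.sum_le_sum fun k _ => ?_
    refine mul_le_mul_of_nonneg_left ?_ (hw a k)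
    refine le_min ?_ ?_
    · refine le_trans (Finset.sum_le_sum fun A _ => min_le_left _ _) ?_
      exact le_of_eq rfl
    · rw [marg, Finset.mul_sum]
      exact Finset.sum_le_sum fun A _ => min_le_right _ _
  · refine Finset.sum_le_sum fun a _ => Finset.sum_le_sum fun k _ => ?_
    exact mul_le_mul_of_nonneg_left (min_le_left _ _) (hw a k)
end

section
/- Let h, π, π̂ be probability distributions over a finite set, M > 0, and A an element with π(A) > 0 and h(A)/π(A) ≤ M, where the ratio h(A)/π̂(A) is interpreted as M when π̂(A) = 0. Then min{h(A)/π̂(A), M}·π(A) ≤ h(A) + M·|π̂(A) − π(A)| and min{h(A)/π̂(A), M}·π(A) ≥ h(A) − M·|π̂(A) − π(A)|. -/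
theorem stmt4 {𝒜 : Type*} [Fintype 𝒜] (h π πh : 𝒜 → ℝ)
    (hh0 : ∀ A, 0 ≤ h A) (hπ0 : ∀ A, 0 ≤ π A) (hπh0 : ∀ A, 0 ≤ πh A)
    (hh1 : ∑ A, h A = 1) (hπ1 : ∑ A, π A = 1) (hπh1 : ∑ A, πh A = 1)
    (M : ℝ) (hM : 0 < M) (A : 𝒜) (hπA : 0 < π A) (hr : h A / π A ≤ M) :
    (if πh A = 0 then M else min (h A / πh A) M) * π A
        ≤ h A + M * |πh A - π A| ∧
    h A - M * |πh A - π A|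
        ≤ (if πh A = 0 then M else min (h A / πh A) M) * π A := by
  have hhA := hh0 A
  have hπhA := hπh0 A
  have hMπ : h A ≤ M * π A := by
    rw [div_le_iff₀ hπA] at hr; linarith
  by_cases h0 : πh A = 0
  · simp only [h0, if_true]
    have habs : |0 - π A| = π A := by
      rw [abs_of_nonpos (by linarith)]; ring
    rw [habs]
    constructor <;> linarith
  · simp only [h0, if_false]
    have hπh : 0 < πh A := lt_of_le_of_ne hπhA (Ne.symm h0)
    rcases le_or_gt (h A / πh A) M with hc | hc
    · rw [min_eq_left hc]
      have hhm : h A ≤ M * πh A := by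
        rw [div_le_iff₀ hπh] at hc; linarith
      have key : h A / πh A * π A = h A * π A / πh A := by ring
      rcases abs_cases (πh A - π A) with ⟨he, _⟩ | ⟨he, _⟩ <;> rw [he] <;>
        constructor
      · rw [key, div_le_iff₀ hπh]; nlinarith
      · rw [key, le_div_iff₀ hπh]; nlinarith
      · rw [key, div_le_iff₀ hπh]; nlinarith
      · rw [key, le_div_iff₀ hπh]; nlinarith
    · rw [min_eq_right hc.le]
      have hhm2 : M * πh A < h A := (lt_div_iff₀ hπh).mp hc
      rcases abs_cases (πh A - π A) with ⟨he, _⟩ | ⟨he, _⟩ <;> rw [he] <;>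
        constructor <;> nlinarith
end

section
/- Under the position-based click model where w̄(a,k) = μ(a)·p(k) with μ(a), p(k) ≥ 0, for any policies h, π over lists and any M > 0: Σ_{a,k} μ(a) p(k) · min{h(a,k), M π(a,k)} ≤ Σ_a μ(a) · min{⟨p, h(a,·)⟩, M·⟨p, π(a,·)⟩} ≤ Σ_a μ(a) ⟨p, h(a,·)⟩, where ⟨p, h(a,·)⟩ = Σ_k p(k) h(a,k). -/
theorem stmt6 {E : Type*} [Fintype E] [DecidableEq E] {K : ℕ}
    (h π : {A : Fin K → E // Function.Injective A} → ℝ)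
    (hh0 : ∀ A, 0 ≤ h A) (hπ0 : ∀ A, 0 ≤ π A)
    (hh1 : ∑ A, h A = 1) (hπ1 : ∑ A, π A = 1)
    (μ : E → ℝ) (p : Fin K → ℝ) (hμ : ∀ a, 0 ≤ μ a) (hp : ∀ k, 0 ≤ p k)
    (M : ℝ) (hM : 0 < M) :
    (∑ a : E, ∑ k : Fin K, μ a * p k * min (marg h a k) (M * marg π a k))
      ≤ ∑ a : E, μ a *
          min (∑ k : Fin K, p k * marg h a k) (M * ∑ k : Fin K, p k * marg π a k) ∧
    (∑ a : E, μ a *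
        min (∑ k : Fin K, p k * marg h a k) (M * ∑ k : Fin K, p k * marg π a k))
      ≤ ∑ a : E, μ a * ∑ k : Fin K, p k * marg h a k := by
  constructor
  · apply Finset.sum_le_sum
    intro a _
    have : ∑ k : Fin K, μ a * p k * min (marg h a k) (M * marg π a k)
        = μ a * ∑ k : Fin K, p k * min (marg h a k) (M * marg π a k) := by
      rw [Finset.mul_sum]; congr 1; ext k; ring
    rw [this]
    apply mul_le_mul_of_nonneg_left _ (hμ a)
    apply le_min
    · apply Finset.sum_le_sum
      intro k _
      exact mul_le_mul_of_nonneg_left (min_le_left _ _) (hp k)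
    · rw [Finset.mul_sum]
      apply Finset.sum_le_sum
      intro k _
      calc p k * min (marg h a k) (M * marg π a k) ≤ p k * (M * marg π a k) :=
            mul_le_mul_of_nonneg_left (min_le_right _ _) (hp k)
        _ = M * (p k * marg π a k) := by ring
  · apply Finset.sum_le_sum
    intro a _
    exact mul_le_mul_of_nonneg_left (min_le_left _ _) (hμ a)
end

section
/- Let h, π be distributions over K-permutations of E with item-position marginals h(a,k), π(a,k), and let π̂ be any estimated logging policy with marginals π̂(a,k). Fix M > 0 and nonnegative click probabilities w̄(a,k). Define the expected IP estimate Ê = Σ_{a,k} w̄(a,k)·min{h(a,k)/π̂(a,k), M}·π(a,k) (ratio taken as M when π̂(a,k)=0). Then Ê ≤ V(h) + M·Σ_{a,k} 1{h(a,k) ≤ M π(a,k)}·w̄(a,k)·|π̂(a,k) − π(a,k)|, where V(h) = Σ_{a,k} w̄(a,k) h(a,k). -/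
lemma key_ip (h p q M : ℝ) (hh : 0 ≤ h) (hp : 0 ≤ p) (hq : 0 ≤ q) (hM : 0 < M) :
    (if q = 0 then M else min (h / q) M) * p
      ≤ h + M * ((if h ≤ M * p then (1:ℝ) else 0) * |q - p|) := by
  by_cases hcase : h ≤ M * p
  · simp only [if_pos hcase, one_mul]
    by_cases hq0 : q = 0
    · subst hq0
      rw [if_pos rfl, zero_sub, abs_neg, abs_of_nonneg hp]
      nlinarith
    · rw [if_neg hq0]
      have hq' : 0 < q := lt_of_le_of_ne hq (Ne.symm hq0)
      have hr0 : 0 ≤ min (h / q) M := le_min (div_nonneg hh hq) hM.le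
      have hrq : min (h / q) M * q ≤ h := by
        calc min (h / q) M * q ≤ (h / q) * q := by
              nlinarith [min_le_left (h / q) M]
        _ = h := div_mul_cancel₀ h hq0
      by_cases hpq : p ≤ q
      · have h1 : min (h / q) M * p ≤ min (h / q) M * q := by nlinarith
        have habs : 0 ≤ |q - p| := abs_nonneg _
        nlinarith
      · push_neg at hpq
        have habs : |q - p| = p - q := by
          rw [abs_of_nonpos (by linarith)]; ring
        have hrM : min (h / q) M ≤ M := min_le_right _ _
        nlinarith
  · simp only [if_neg hcase, zero_mul, mul_zero, add_zero]
    push_neg at hcase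
    have hr : (if q = 0 then M else min (h / q) M) ≤ M := by
      split
      · exact le_rfl
      · exact min_le_right _ _
    nlinarith

lemma key_ip2 (wv h p q M : ℝ) (hwv : 0 ≤ wv) (hh : 0 ≤ h) (hp : 0 ≤ p) (hq : 0 ≤ q)
    (hM : 0 < M) :
    wv * (if q = 0 then M else min (h / q) M) * p
      ≤ wv * h + M * ((if h ≤ M * p then (1:ℝ) else 0) * wv * |q - p|) := by
  have h2 := mul_le_mul_of_nonneg_left (key_ip h p q M hh hp hq hM) hwv
  calc wv * (if q = 0 then M else min (h / q) M) * p
      = wv * ((if q = 0 then M else min (h / q) M) * p) := by ring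
    _ ≤ wv * (h + M * ((if h ≤ M * p then (1:ℝ) else 0) * |q - p|)) := h2
    _ = wv * h + M * ((if h ≤ M * p then (1:ℝ) else 0) * wv * |q - p|) := by ring

theorem stmt15 {E : Type*} [Fintype E] [DecidableEq E] {K : ℕ}
    (h π πh : {A : Fin K → E // Function.Injective A} → ℝ)
    (hh0 : ∀ A, 0 ≤ h A) (hπ0 : ∀ A, 0 ≤ π A) (hπh0 : ∀ A, 0 ≤ πh A)
    (hh1 : ∑ A, h A = 1) (hπ1 : ∑ A, π A = 1) (hπh1 : ∑ A, πh A = 1)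
    (w : E → Fin K → ℝ) (hw : ∀ a k, 0 ≤ w a k)
    (M : ℝ) (hM : 0 < M) :
    ∑ a : E, ∑ k : Fin K, w a k *
        (if marg πh a k = 0 then M else min (marg h a k / marg πh a k) M) *
        marg π a k
      ≤ (∑ a : E, ∑ k : Fin K, w a k * marg h a k) +
        M * ∑ a : E, ∑ k : Fin K,
          (if marg h a k ≤ M * marg π a k then (1 : ℝ) else 0) *
            w a k * |marg πh a k - marg π a k| := by
  have mnn : ∀ (f : {A : Fin K → E // Function.Injective A} → ℝ),
      (∀ A, 0 ≤ f A) → ∀ a k, 0 ≤ marg f a k := fun f hf a k =>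
    Finset.sum_nonneg (fun A _ => hf A)
  calc ∑ a : E, ∑ k : Fin K, w a k *
        (if marg πh a k = 0 then M else min (marg h a k / marg πh a k) M) *
        marg π a k
      ≤ ∑ a : E, ∑ k : Fin K, (w a k * marg h a k +
          M * ((if marg h a k ≤ M * marg π a k then (1:ℝ) else 0) *
            w a k * |marg πh a k - marg π a k|)) := by
        refine Finset.sum_le_sum fun a _ => Finset.sum_le_sum fun k _ => ?_
        exact key_ip2 _ _ _ _ _ (hw a k) (mnn h hh0 a k) (mnn π hπ0 a k)
          (mnn πh hπh0 a k) hM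
    _ = (∑ a : E, ∑ k : Fin K, w a k * marg h a k) +
        M * ∑ a : E, ∑ k : Fin K,
          (if marg h a k ≤ M * marg π a k then (1 : ℝ) else 0) *
            w a k * |marg πh a k - marg π a k| := by
        simp [Finset.sum_add_distrib, Finset.mul_sum]
end

section
/- Let h, π, π̂, w̄, M be as in the IP setting. Then Σ_{a,k} w̄(a,k)·min{h(a,k)/π̂(a,k), M}·π(a,k) ≥ Σ_{a,k} 1{h(a,k) ≤ M π(a,k)}·w̄(a,k)·h(a,k) − M·Σ_{a,k} 1{h(a,k) ≤ M π(a,k)}·w̄(a,k)·|π̂(a,k) − π(a,k)|. -/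
theorem stmt16 {E : Type*} [Fintype E] [DecidableEq E] {K : ℕ}
    (h π πh : {A : Fin K → E // Function.Injective A} → ℝ)
    (hh0 : ∀ A, 0 ≤ h A) (hπ0 : ∀ A, 0 ≤ π A) (hπh0 : ∀ A, 0 ≤ πh A)
    (hh1 : ∑ A, h A = 1) (hπ1 : ∑ A, π A = 1) (hπh1 : ∑ A, πh A = 1)
    (w : E → Fin K → ℝ) (hw : ∀ a k, 0 ≤ w a k)
    (M : ℝ) (hM : 0 < M) :
    (∑ a : E, ∑ k : Fin K,
        (if marg h a k ≤ M * marg π a k then (1 : ℝ) else 0) *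
          w a k * marg h a k) -
      M * ∑ a : E, ∑ k : Fin K,
        (if marg h a k ≤ M * marg π a k then (1 : ℝ) else 0) *
          w a k * |marg πh a k - marg π a k|
      ≤ ∑ a : E, ∑ k : Fin K, w a k *
          (if marg πh a k = 0 then M else min (marg h a k / marg πh a k) M) *
          marg π a k := by
  have hH : ∀ a k, 0 ≤ marg h a k := fun a k =>
    Finset.sum_nonneg fun A _ => hh0 A
  have hP : ∀ a k, 0 ≤ marg π a k := fun a k =>
    Finset.sum_nonneg fun A _ => hπ0 A
  have hQ : ∀ a k, 0 ≤ marg πh a k := fun a k =>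
    Finset.sum_nonneg fun A _ => hπh0 A
  rw [Finset.mul_sum, ← Finset.sum_sub_distrib]
  apply Finset.sum_le_sum
  intro a _
  rw [Finset.mul_sum, ← Finset.sum_sub_distrib]
  apply Finset.sum_le_sum
  intro k _
  set H := marg h a k with hHdef
  set P := marg π a k with hPdef
  set Q := marg πh a k with hQdef
  have hH' := hH a k; have hP' := hP a k; have hQ' := hQ a k
  have hw' := hw a k
  rw [← hHdef, ← hPdef, ← hQdef] at *
  have hr : 0 ≤ (if Q = 0 then M else min (H / Q) M) := by
    split
    · exact le_of_lt hM
    · exact le_min (div_nonneg hH' hQ') (le_of_lt hM)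
  by_cases hind : H ≤ M * P
  · rw [if_pos hind]
    have key : H - M * |Q - P| ≤ (if Q = 0 then M else min (H / Q) M) * P := by
      by_cases hq : Q = 0
      · rw [if_pos hq, hq, zero_sub, abs_neg, abs_of_nonneg hP']
        nlinarith
      · rw [if_neg hq]
        have hq' : 0 < Q := lt_of_le_of_ne hQ' (Ne.symm hq)
        rcases le_total M (H / Q) with hc | hc
        · rw [min_eq_right hc]
          have := abs_nonneg (Q - P)
          nlinarith
        · rw [min_eq_left hc]
          have h2 : H ≤ M * Q := by
            rw [div_le_iff₀ hq'] at hc; linarith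
          rcases le_total P Q with hpq | hpq
          · rw [abs_of_nonneg (by linarith : (0:ℝ) ≤ Q - P)]
            rw [div_mul_eq_mul_div, le_div_iff₀ hq']
            nlinarith
          · rw [abs_of_nonpos (by linarith : Q - P ≤ 0)]
            rw [div_mul_eq_mul_div, le_div_iff₀ hq']
            nlinarith
    have := mul_le_mul_of_nonneg_left key hw'
    nlinarith
  · rw [if_neg hind]
    have : 0 ≤ w a k * (if Q = 0 then M else min (H / Q) M) * P :=
      mul_nonneg (mul_nonneg hw' hr) hP'
    nlinarith [abs_nonneg (Q - P)]
end

section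
/- Let f : 𝒜 → [0, K] and let π, π̂ be distributions on a finite set 𝒜. For any distribution h on 𝒜 and any M > 0, the clipped estimator value satisfies 0 ≤ Σ_A f(A)·min{h(A)/π̂(A), M}·π(A) ≤ Σ_A f(A)·h(A) + M·Σ_A 1{h(A) ≤ M π(A)}·f(A)·|π̂(A) − π(A)|, where min{h(A)/π̂(A), M} is interpreted as M when π̂(A) = 0. -/
theorem stmt19 {𝒜 : Type*} [Fintype 𝒜] (K : ℝ) (f : 𝒜 → ℝ)
    (hf : ∀ A, f A ∈ Set.Icc 0 K)
    (h π πh : 𝒜 → ℝ)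
    (hh0 : ∀ A, 0 ≤ h A) (hπ0 : ∀ A, 0 ≤ π A) (hπh0 : ∀ A, 0 ≤ πh A)
    (hh1 : ∑ A, h A = 1) (hπ1 : ∑ A, π A = 1) (hπh1 : ∑ A, πh A = 1)
    (M : ℝ) (hM : 0 < M) :
    0 ≤ ∑ A, f A * (if πh A = 0 then M else min (h A / πh A) M) * π A ∧
    ∑ A, f A * (if πh A = 0 then M else min (h A / πh A) M) * π A
      ≤ (∑ A, f A * h A) +
        M * ∑ A, (if h A ≤ M * π A then (1 : ℝ) else 0) * f A * |πh A - π A| := by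
  constructor
  · apply Finset.sum_nonneg
    intro A _
    have hf0 := (hf A).1
    have hπ0' := hπ0 A
    have hh0' := hh0 A
    have hπh0' := hπh0 A
    split_ifs with h1
    · positivity
    · have hm0 : 0 ≤ min (h A / πh A) M := le_min (by positivity) hM.le
      positivity
  · have key : ∀ A ∈ Finset.univ,
        f A * (if πh A = 0 then M else min (h A / πh A) M) * π A
          ≤ f A * h A + M * ((if h A ≤ M * π A then (1 : ℝ) else 0) * f A * |πh A - π A|) := by
      intro A _
      have hf0 := (hf A).1
      have hπ0' := hπ0 A
      have hh0' := hh0 A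
      have hπh0' := hπh0 A
      split_ifs with h1 h2
      · rw [h1, zero_sub, abs_neg, abs_of_nonneg hπ0']
        nlinarith [mul_nonneg hf0 hh0']
      · rw [h1] at *
        have hlt : M * π A < h A := not_le.mp h2
        nlinarith [mul_le_mul_of_nonneg_left hlt.le hf0]
      all_goals {
        have hπhpos : 0 < πh A := lt_of_le_of_ne hπh0' (Ne.symm ‹πh A ≠ 0›)
        set m := min (h A / πh A) M with hm
        have hm0 : 0 ≤ m := le_min (by positivity) hM.le
        have hmM : m ≤ M := min_le_right _ _
        have hmπh : m * πh A ≤ h A := (le_div_iff₀ hπhpos).mp (min_le_left _ _)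
        have habs0 : (0:ℝ) ≤ |πh A - π A| := abs_nonneg _
        have hd : π A - πh A ≤ |πh A - π A| := by
          have := neg_abs_le (πh A - π A); linarith
        have step : m * (π A - πh A) ≤ M * |πh A - π A| :=
          le_trans (mul_le_mul_of_nonneg_left hd hm0)
            (mul_le_mul_of_nonneg_right hmM habs0)
        first
        | nlinarith [mul_le_mul_of_nonneg_left hmπh hf0,
            mul_le_mul_of_nonneg_left step hf0]
        | (have hlt : M * π A < h A := not_le.mp ‹¬ h A ≤ M * π A›
           nlinarith [mul_le_mul_of_nonneg_left hlt.le hf0,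
             mul_le_mul_of_nonneg_right hmM hπ0',
             mul_le_mul_of_nonneg_left (mul_le_mul_of_nonneg_right hmM hπ0') hf0]) }
    calc ∑ A, f A * (if πh A = 0 then M else min (h A / πh A) M) * π A
        ≤ ∑ A, (f A * h A + M * ((if h A ≤ M * π A then (1 : ℝ) else 0) * f A * |πh A - π A|)) :=
          Finset.sum_le_sum key
      _ = (∑ A, f A * h A) +
            M * ∑ A, (if h A ≤ M * π A then (1 : ℝ) else 0) * f A * |πh A - π A| := by
          rw [Finset.sum_add_distrib, Finset.mul_sum]
end
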